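/- Covering converse: Let G be a (k,m,t,E)_q t-defect correcting design and for t <= j < qt let pi_j be the fraction of left vertices of degree exactly j, with pi_{qt} the fraction of left vertices of degree at least qt. Then sum over j of pi_j * log_q(floor(j/t)), taken over t+1 <= j <= qt, is at least 1 + (t-1)*pi_t - (m/k); equivalently, q^{m - (t-1) k pi_t} * prod_j floor(j/t)^{k pi_j} >= q^k. -/

import Mathlib

/-!
A left vertex of degree exactly `t` forces every right coloring serving it to be constant on
its neighbourhood. Hence two such vertices have disjoint neighbourhoods (colour them
differently), and it suffices to use right colorings constant on these `n_t` neighbourhoods, of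
which there are at most `q ^ (m - (t - 1) n_t)`. A fixed right coloring serves a left coloring `c`
only if each `c i` is one of the at most `⌊min(deg i, q t) / t⌋` colours seen `t` times around
`i`. Since all `q ^ k` left colorings are served,
`q ^ k ≤ q ^ (m - (t - 1) n_t) · ∏ᵢ ⌊min(deg i, q t) / t⌋`, and grouping the left vertices by
degree turns the product into `∏ⱼ ⌊j / t⌋ ^ n_j`.
-/

open Finset

/-- A bipartite graph `A : K → M → Bool` is a `t`-defect correcting design over an
alphabet of size `q` if for every `q`-coloring of the left vertices there is a
`q`-coloring of the right vertices such that every left vertex has at least `t`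
same-colored right-neighbors. -/
def Correcting (q t : ℕ) {K M : Type*} [Fintype K] [Fintype M]
    (A : K → M → Bool) : Prop :=
  ∀ c : K → Fin q, ∃ r : M → Fin q, ∀ i : K,
    t ≤ (Finset.univ.filter (fun j : M => A i j ∧ r j = c i)).card

/-- Degree of a left vertex. -/
def ldeg {K M : Type*} [Fintype K] [Fintype M] (A : K → M → Bool) (i : K) : ℕ :=
  (Finset.univ.filter (fun j : M => A i j)).card

/-- Total number of edges. -/
def edges {K M : Type*} [Fintype K] [Fintype M] (A : K → M → Bool) : ℕ :=
  ∑ i : K, ldeg A i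

section Counting

variable {α M : Type*} [Fintype α] [DecidableEq α]

lemma card_filter_le_card_fiber_mul_le (s : Finset M) (r : M → α) (t : ℕ) :
    #{a | t ≤ #{j ∈ s | r j = a}} * t ≤ #s := by
  set H : Finset α := {a | t ≤ #{j ∈ s | r j = a}}
  calc #H * t = t * #H := mul_comm _ _
    _ ≤ #{j ∈ s | r j ∈ H} := by
        refine mul_card_image_le_card_of_maps_to (fun j hj => (mem_filter.1 hj).2) t
          fun a ha => ?_
        rw [filter_filter]
        convert (mem_filter.1 ha).2 using 3
        exact and_iff_right_of_imp fun h => h ▸ ha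
    _ ≤ #s := card_filter_le _ _

lemma card_filter_constOn_mul_pow_le [Fintype M] [DecidableEq M] {ι : Type*} (S : Finset ι)
    (N : ι → Finset M) (hdisj : (S : Set ι).PairwiseDisjoint N)
    (hne : ∀ i ∈ S, (N i).Nonempty) :
    #{f : M → α | ∀ i ∈ S, ∀ j ∈ N i, ∀ j' ∈ N i, f j = f j'} *
        Fintype.card α ^ ∑ i ∈ S, (#(N i) - 1) ≤ Fintype.card α ^ Fintype.card M := by
  obtain rfl | ⟨i₀, hi₀⟩ := S.eq_empty_or_nonempty
  · simp
  have : Nonempty M := ⟨(hne i₀ hi₀).choose⟩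
  choose! p hp using hne
  set T : Finset M := S.biUnion fun i => (N i).erase (p i)
  have hT : #T = ∑ i ∈ S, (#(N i) - 1) := by
    rw [card_biUnion fun i hi i' hi' hii' =>
      (hdisj hi hi' hii').mono (erase_subset _ _) (erase_subset _ _)]
    exact sum_congr rfl fun i hi => card_erase_of_mem (hp i hi)
  have hpT : ∀ i ∈ S, p i ∉ T := by
    intro i hi hpi
    obtain ⟨i', hi', hpi'⟩ := mem_biUnion.1 hpi
    obtain ⟨hpi_ne, hmem⟩ := mem_erase.1 hpi'
    obtain rfl : i = i' := by
      by_contra hii'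
      exact disjoint_left.1 (hdisj hi hi' hii') (hp i hi) hmem
    exact hpi_ne rfl
  -- a function constant on each `N i` is determined by its values off `T`, as `p i ∉ T`
  have hinj : Set.InjOn (fun f : M → α => fun j : ↥(Tᶜ) => f j)
      ↑({f | ∀ i ∈ S, ∀ j ∈ N i, ∀ j' ∈ N i, f j = f j'} : Finset (M → α)) := by
    intro f hf f' hf' hff'
    simp only [coe_filter, Set.mem_ofPred_eq, mem_univ, true_and] at hf hf'
    have hoff : ∀ j ∉ T, f j = f' j := fun j hj => congrFun hff' ⟨j, mem_compl.2 hj⟩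
    funext j
    by_cases hj : j ∈ T
    · obtain ⟨i, hi, hji⟩ := mem_biUnion.1 hj
      have hjN := mem_of_mem_erase hji
      rw [hf i hi j hjN (p i) (hp i hi), hf' i hi j hjN (p i) (hp i hi),
        hoff _ (hpT i hi)]
    · exact hoff j hj
  calc _ ≤ Fintype.card (↥(Tᶜ) → α) * Fintype.card α ^ #T := by
        rw [hT]
        exact Nat.mul_le_mul_right _ (card_le_card_of_injOn _ (fun _ _ => mem_univ _) hinj)
    _ = Fintype.card α ^ Fintype.card M := by
        rw [Fintype.card_fun, Fintype.card_coe, ← pow_add, card_compl_add_card]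

lemma prod_div_eq_prod_Icc_pow {ι : Type*} (s : Finset ι) (g : ι → ℕ) {t N : ℕ}
    (ht : 0 < t) (hg : ∀ i ∈ s, g i ∈ Icc t N) :
    ∏ i ∈ s, g i / t = ∏ j ∈ Icc (t + 1) N, (j / t) ^ #{i ∈ s | g i = j} := by
  rw [← prod_fiberwise_of_maps_to' hg (· / t)]
  simp_rw [prod_const]
  refine (prod_subset (Icc_subset_Icc_left t.le_succ) fun j hj hj' => ?_).symm
  obtain rfl : j = t := by simp only [mem_Icc] at hj hj'; omega
  rw [Nat.div_self ht, one_pow]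

end Counting

section Design

variable {K M : Type*} [Fintype K] [Fintype M] {q t : ℕ} {A : K → M → Bool}

def nbhd (A : K → M → Bool) (i : K) : Finset M := {j | A i j}

def tight (A : K → M → Bool) (t : ℕ) : Finset K := {i | ldeg A i = t}

def covered [DecidableEq K] (A : K → M → Bool) (t : ℕ) (r : M → Fin q) :
    Finset (K → Fin q) :=
  {c | ∀ i, t ≤ #{j ∈ nbhd A i | r j = c i}}

def flatColorings [DecidableEq M] (A : K → M → Bool) (q t : ℕ) : Finset (M → Fin q) :=
  {r | ∀ i ∈ tight A t, ∀ j ∈ nbhd A i, ∀ j' ∈ nbhd A i, r j = r j'}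

lemma card_nbhd_of_mem_tight {i : K} (hi : i ∈ tight A t) : #(nbhd A i) = t :=
  (mem_filter.1 hi).2

lemma Correcting.exists_covering (h : Correcting q t A) (c : K → Fin q) :
    ∃ r : M → Fin q, ∀ i, t ≤ #{j ∈ nbhd A i | r j = c i} := by
  simpa only [nbhd, filter_filter] using h c

lemma Correcting.le_ldeg (h : Correcting q t A) (hq : 0 < q) (i : K) : t ≤ ldeg A i := by
  obtain ⟨r, hr⟩ := h.exists_covering fun _ => ⟨0, hq⟩
  exact (hr i).trans (card_filter_le _ _)

lemma eq_of_mem_nbhd_of_mem_tight {i : K} (hi : i ∈ tight A t) {r : M → Fin q} {a : Fin q}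
    (hr : t ≤ #{j ∈ nbhd A i | r j = a}) : ∀ j ∈ nbhd A i, r j = a :=
  card_filter_eq_iff.1 ((card_filter_le _ _).antisymm (card_nbhd_of_mem_tight hi ▸ hr))

lemma Correcting.disjoint_nbhd (h : Correcting q t A) (hq : 2 ≤ q) {i₁ i₂ : K}
    (hne : i₁ ≠ i₂) (h₁ : i₁ ∈ tight A t) (h₂ : i₂ ∈ tight A t) :
    Disjoint (nbhd A i₁) (nbhd A i₂) := by
  classical
  obtain ⟨r, hr⟩ :=
    h.exists_covering (Function.update (fun _ => ⟨1, hq⟩) i₁ ⟨0, by omega⟩)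
  refine disjoint_left.2 fun j hj₁ hj₂ => ?_
  have := (eq_of_mem_nbhd_of_mem_tight h₁ (hr i₁) j hj₁).symm.trans
    (eq_of_mem_nbhd_of_mem_tight h₂ (hr i₂) j hj₂)
  simp [hne.symm] at this

lemma card_covered_le [DecidableEq K] (ht : 0 < t) (r : M → Fin q) :
    #(covered A t r) ≤ ∏ i, min (ldeg A i) (q * t) / t := by
  calc #(covered A t r) ≤ #(Fintype.piFinset fun i => {a | t ≤ #{j ∈ nbhd A i | r j = a}}) :=
        card_le_card fun c hc => Fintype.mem_piFinset.2 fun i =>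
          mem_filter.2 ⟨mem_univ _, (mem_filter.1 hc).2 i⟩
    _ = ∏ i, #{a | t ≤ #{j ∈ nbhd A i | r j = a}} := Fintype.card_piFinset _
    _ ≤ ∏ i, min (ldeg A i) (q * t) / t := by
        refine prod_le_prod' fun i _ => (Nat.le_div_iff_mul_le ht).2 (le_min ?_ ?_)
        · exact card_filter_le_card_fiber_mul_le _ _ _
        · simpa using Nat.mul_le_mul_right t (card_le_univ (α := Fin q) _)

lemma Correcting.pow_card_le [DecidableEq K] [DecidableEq M] (h : Correcting q t A) (ht : 0 < t) :
    q ^ Fintype.card K ≤ #(flatColorings A q t) * ∏ i, min (ldeg A i) (q * t) / t := by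
  have hcover : (univ : Finset (K → Fin q)) ⊆ (flatColorings A q t).biUnion (covered A t) := by
    intro c _
    obtain ⟨r, hr⟩ := h.exists_covering c
    refine mem_biUnion.2 ⟨r, ?_, mem_filter.2 ⟨mem_univ c, hr⟩⟩
    simp only [flatColorings, mem_filter, mem_univ, true_and]
    intro i hi j hj j' hj'
    have hconst := eq_of_mem_nbhd_of_mem_tight hi (hr i)
    rw [hconst j hj, hconst j' hj']
  calc q ^ Fintype.card K = #(univ : Finset (K → Fin q)) := by simp
    _ ≤ ∑ r ∈ flatColorings A q t, #(covered A t r) :=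
        (card_le_card hcover).trans card_biUnion_le
    _ ≤ #(flatColorings A q t) * ∏ i, min (ldeg A i) (q * t) / t := by
        simpa using sum_le_card_nsmul _ _ _ fun r _ => card_covered_le ht r

lemma Correcting.card_flatColorings_mul_pow_le [DecidableEq M] (h : Correcting q t A)
    (hq : 2 ≤ q) (ht : 0 < t) :
    #(flatColorings A q t) * q ^ ((t - 1) * #(tight A t)) ≤ q ^ Fintype.card M := by
  have hne : ∀ i ∈ tight A t, (nbhd A i).Nonempty := fun i hi =>
    card_pos.1 (card_nbhd_of_mem_tight hi ▸ ht)
  have := card_filter_constOn_mul_pow_le (α := Fin q) (tight A t) (nbhd A)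
    (fun i₁ h₁ i₂ h₂ hne => h.disjoint_nbhd hq hne h₁ h₂) hne
  rwa [Fintype.card_fin, sum_congr rfl fun i hi => congrArg (· - 1) (card_nbhd_of_mem_tight hi),
    sum_const, smul_eq_mul, mul_comm (#(tight A t))] at this

end Design

/-- Covering converse. For a `(k,m,t,E)_q`-design let `n j` (for `t ≤ j < q*t`)
be the number of left vertices of degree exactly `j`, and `n (q*t)` the number of
left vertices of degree at least `q*t`. Then
`q^(m - (t-1)·n t) · ∏_{j=t+1}^{q t} ⌊j/t⌋^(n j) ≥ q^k`, stated in
subtraction-free form. Dividing by `k` and taking `log_q` this is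
`∑_{j=t+1}^{q t} π_j log_q ⌊j/t⌋ ≥ 1 + (t-1)π_t - ρ t`. -/
theorem covering_converse {K M : Type*} [Fintype K] [Fintype M] {q t : ℕ}
    (hq : 2 ≤ q) (ht : 1 ≤ t) (A : K → M → Bool) (h : Correcting q t A)
    (n : ℕ → ℕ)
    (hn : ∀ j, j < q * t → n j = (Finset.univ.filter (fun i : K => ldeg A i = j)).card)
    (hntop : n (q * t) = (Finset.univ.filter (fun i : K => q * t ≤ ldeg A i)).card) :
    q ^ (Fintype.card K + (t - 1) * n t) ≤
      q ^ (Fintype.card M) * ∏ j ∈ Finset.Icc (t + 1) (q * t), (j / t) ^ (n j) := by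
  classical
  have htq : t < q * t := lt_mul_left ht (by omega)
  have hfiber : ∀ j ∈ Icc (t + 1) (q * t), #{i | min (ldeg A i) (q * t) = j} = n j := by
    intro j hj
    rcases (mem_Icc.1 hj).2.lt_or_eq with hlt | rfl
    · rw [hn j hlt]
      congr 1
      ext i
      simp only [mem_filter, mem_univ, true_and]
      omega
    · simp only [hntop, min_eq_right_iff]
  have hmin : ∀ i ∈ univ, min (ldeg A i) (q * t) ∈ Icc t (q * t) := fun i _ =>
    mem_Icc.2 ⟨le_min (h.le_ldeg (by omega) i) htq.le, min_le_right _ _⟩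
  calc q ^ (Fintype.card K + (t - 1) * n t)
      = q ^ Fintype.card K * q ^ ((t - 1) * #(tight A t)) := by rw [pow_add, hn t htq]; rfl
    _ ≤ #(flatColorings A q t) * q ^ ((t - 1) * #(tight A t)) *
          ∏ i, min (ldeg A i) (q * t) / t := by
        rw [mul_right_comm]
        exact Nat.mul_le_mul_right _ (h.pow_card_le ht)
    _ ≤ q ^ Fintype.card M * ∏ i, min (ldeg A i) (q * t) / t :=
        Nat.mul_le_mul_right _ (h.card_flatColorings_mul_pow_le hq ht)
    _ = q ^ Fintype.card M * ∏ j ∈ Icc (t + 1) (q * t), (j / t) ^ n j := by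
        rw [prod_div_eq_prod_Icc_pow _ _ ht hmin, prod_congr rfl fun j hj => by rw [hfiber j hj]]
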